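/- Let Λ = diag(λ₁,…,λ_n) be a diagonal real matrix and let k : ℝ → Matrix (Fin n) (Fin n) ℝ satisfy, for every t, k'(t) = M(k(t)·Λ·k(t)ᵀ)·k(t) and k(t)ᵀ·k(t) = 1. Write L(t) = k(t)·Λ·k(t)ᵀ and, for column indices a < b, let m_{ab}(t) = k(t)_{1a}·k(t)_{2b} − k(t)_{1b}·k(t)_{2a} be the 2×2 minor of k(t) on the first two rows and columns a, b. Then for all a, b and all t, (m_{ab})′(t) = (λ_a + λ_b − L(t)_{11} − L(t)_{22})·m_{ab}(t). (These minors are the functions F^{ρ}_j of the representation of sl_n on Λ²V and are semiinvariants of the Toda flow.) -/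

import Mathlib

open Matrix

attribute [local instance] Matrix.normedAddCommGroup Matrix.normedSpace

/-- The Toda projection: `M(A)_{ij} = A_{ij}` for `i < j`, `M(A)_{ij} = -A_{ji}` for
`i > j`, and `M(A)_{ii} = 0`. -/
def todaProj {n : ℕ} (A : Matrix (Fin n) (Fin n) ℝ) : Matrix (Fin n) (Fin n) ℝ :=
  Matrix.of fun i j => if i < j then A i j else if j < i then -A j i else 0

/-! Since `kᵀk = 1`, `L·k = k·Λ`; and `M(L)` differs from `L` in rows 1 and 2 only by the
diagonal entries and by `M(L)₂₁ = -L₁₂ = -L₂₁`. Hence row 1 of `k'` is `(Λ - L₁₁)·k₁` and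
row 2 is `(Λ - L₂₂)·k₂ - 2L₁₂·k₁`; the extra multiple of `k₁` drops out of each minor. -/

namespace Matrix

variable {m α : Type*} [Fintype m] [CommSemiring α] {n : ℕ}

theorem isSymm_mul_mul_transpose {A : Matrix m m α} (hA : A.IsSymm) (K : Matrix m m α) :
    (K * A * Kᵀ).IsSymm := by
  rw [IsSymm, transpose_mul, transpose_mul, transpose_transpose, hA.eq, Matrix.mul_assoc]

theorem mul_mul_transpose_mul_of_transpose_mul_self [DecidableEq m] {K : Matrix m m α}
    (hK : Kᵀ * K = 1) (A : Matrix m m α) : K * A * Kᵀ * K = K * A := by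
  rw [Matrix.mul_assoc, hK, Matrix.mul_one]

theorem todaProj_mul_apply_zero (A B : Matrix (Fin (n + 1)) (Fin (n + 1)) ℝ) (c : Fin (n + 1)) :
    (todaProj A * B) 0 c = (A * B) 0 c - A 0 0 * B 0 c := by
  simp [mul_apply, Fin.sum_univ_succ, todaProj, Fin.succ_pos]

theorem todaProj_mul_apply_one (A B : Matrix (Fin (n + 2)) (Fin (n + 2)) ℝ) (c : Fin (n + 2)) :
    (todaProj A * B) 1 c = (A * B) 1 c - A 1 1 * B 1 c - (A 0 1 + A 1 0) * B 0 c := by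
  simp [mul_apply, Fin.sum_univ_succ, todaProj, Fin.one_lt_succ_succ]
  ring

end Matrix

theorem HasDerivAt.matrix_apply {m n : Type*} [Fintype m] [Fintype n] {K : ℝ → Matrix m n ℝ}
    {K' : Matrix m n ℝ} {t : ℝ} (h : HasDerivAt K K' t) (i : m) (j : n) :
    HasDerivAt (fun t => K t i j) (K' i j) t :=
  hasDerivAt_pi.1 (hasDerivAt_pi.1 h i) j

/-- The `2×2` minors `m_{ab}(t) = k(t)_{1a}·k(t)_{2b} − k(t)_{1b}·k(t)_{2a}` on the
first two rows of an orthogonal solution `k(t)` of `k' = M(k·Λ·kᵀ)·k`, `Λ = diag(λ)`,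
are semiinvariants of the Toda flow:
`(m_{ab})′ = (λ_a + λ_b − L_{11} − L_{22})·m_{ab}` where `L = k·Λ·kᵀ`. -/
theorem top_minor_semiinvariant {n : ℕ} (lam : Fin (n + 2) → ℝ)
    (k : ℝ → Matrix (Fin (n + 2)) (Fin (n + 2)) ℝ)
    (hk : ∀ t, HasDerivAt k
      (todaProj (k t * Matrix.diagonal lam * (k t)ᵀ) * k t) t)
    (horth : ∀ t, (k t)ᵀ * k t = 1) :
    ∀ (a b : Fin (n + 2)) (t : ℝ),
      HasDerivAt (fun t => k t 0 a * k t 1 b - k t 0 b * k t 1 a)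
        ((lam a + lam b
            - (k t * Matrix.diagonal lam * (k t)ᵀ) 0 0
            - (k t * Matrix.diagonal lam * (k t)ᵀ) 1 1)
          * (k t 0 a * k t 1 b - k t 0 b * k t 1 a)) t := by
  intro a b t
  set L := k t * diagonal lam * (k t)ᵀ
  have hLk : L * k t = k t * diagonal lam :=
    mul_mul_transpose_mul_of_transpose_mul_self (horth t) _
  have hL : L 1 0 = L 0 1 := (isSymm_mul_mul_transpose (isSymm_diagonal lam) (k t)).apply 0 1
  have row0 (c) : HasDerivAt (fun t => k t 0 c) ((lam c - L 0 0) * k t 0 c) t := by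
    convert (hk t).matrix_apply 0 c using 1
    rw [todaProj_mul_apply_zero, hLk, mul_diagonal]
    ring
  have row1 (c) : HasDerivAt (fun t => k t 1 c)
      ((lam c - L 1 1) * k t 1 c - 2 * L 0 1 * k t 0 c) t := by
    convert (hk t).matrix_apply 1 c using 1
    rw [todaProj_mul_apply_one, hLk, mul_diagonal]
    linear_combination k t 0 c * hL
  exact (((row0 a).mul (row1 b)).sub ((row0 b).mul (row1 a))).congr_deriv (by ring)
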